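/- arXiv:2502.05989 — 7 statements merged into one kernel-verified Lean document; each statement's English description precedes it below -/
import Mathlib

section
/- In a flip automata network, if two finite sequential update schedules consist of applicable-node updates and the multisets of updated nodes are equal, then the resulting configurations are equal. -/
open scoped Classical

/-- A flip automata network. -/
structure FAN (I S : Type*) where
  G : SimpleGraph I
  flip : I → (I → S) → S × (I → Bool)

abbrev FanConfig (I S : Type*) := (I → S) × (I → I → Bool)

def FAN.Applicable {I S : Type*} (net : FAN I S) (cfg : FanConfig I S) (v : I) : Prop :=
  ∀ u, net.G.Adj u v → cfg.2 u v = true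

noncomputable def FAN.updateSet {I S : Type*} (net : FAN I S) (D : Set I)
    (cfg : FanConfig I S) : FanConfig I S :=
  ( fun i => if i ∈ D then (net.flip i cfg.1).1 else cfg.1 i,
    fun i j =>
      if (i ∈ D ∧ (net.flip i cfg.1).2 j = true) ∨ (j ∈ D ∧ (net.flip j cfg.1).2 i = true)
      then !(cfg.2 i j) else cfg.2 i j )

/-- A sequential update schedule (a list of nodes) is valid if each listed node is
applicable at the moment it is updated. -/
def FAN.ValidSeq {I S : Type*} (net : FAN I S) : FanConfig I S → List I → Prop
  | _, [] => True
  | cfg, v :: l => net.Applicable cfg v ∧ FAN.ValidSeq net (net.updateSet {v} cfg) l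

/-- Run a finite sequential update schedule. -/
noncomputable def FAN.run {I S : Type*} (net : FAN I S) (l : List I)
    (cfg : FanConfig I S) : FanConfig I S :=
  l.foldl (fun c v => net.updateSet {v} c) cfg

/-! Two distinct applicable nodes cannot be adjacent, since the indicator of the edge between
them would have to point to both endpoints. Updating one of them therefore neither changes the
inputs of the other's flip function nor touches the other's incident edges, so the two updates
commute and leave each other applicable. Hence the first occurrence of a node `w` that is
applicable at the start can be moved to the front of a valid schedule without changing its
validity or its result; doing this for the first node of the other schedule, induction on the
length finishes the proof. -/

namespace FAN

variable {I S : Type*} {net : FAN I S}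

def IsLocal (net : FAN I S) : Prop :=
  ∀ i (s s' : I → S), s i = s' i → (∀ u, net.G.Adj u i → s u = s' u) →
    net.flip i s = net.flip i s'

def IsOriented (net : FAN I S) (cfg : FanConfig I S) : Prop :=
  ∀ i j, net.G.Adj i j → cfg.2 i j = !cfg.2 j i

lemma updateSet_singleton_fst (v : I) (cfg : FanConfig I S) (i : I) :
    (net.updateSet {v} cfg).1 i = if i = v then (net.flip v cfg.1).1 else cfg.1 i := by
  by_cases h : i = v
  · subst h; simp [updateSet]
  · simp [updateSet, h]

lemma updateSet_singleton_snd (v : I) (cfg : FanConfig I S) (i j : I) :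
    (net.updateSet {v} cfg).2 i j =
      if (i = v ∧ (net.flip v cfg.1).2 j = true) ∨ (j = v ∧ (net.flip v cfg.1).2 i = true)
      then !(cfg.2 i j) else cfg.2 i j := by
  refine if_congr ?_ rfl rfl
  simp only [Set.mem_singleton_iff]
  constructor <;> rintro (⟨rfl, h⟩ | ⟨rfl, h⟩) <;> simp_all

lemma run_cons (v : I) (l : List I) (cfg : FanConfig I S) :
    net.run (v :: l) cfg = net.run l (net.updateSet {v} cfg) := rfl

lemma run_append (l₁ l₂ : List I) (cfg : FanConfig I S) :
    net.run (l₁ ++ l₂) cfg = net.run l₂ (net.run l₁ cfg) :=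
  List.foldl_append

lemma validSeq_append {l₁ l₂ : List I} {cfg : FanConfig I S} :
    net.ValidSeq cfg (l₁ ++ l₂) ↔
      net.ValidSeq cfg l₁ ∧ net.ValidSeq (net.run l₁ cfg) l₂ := by
  induction l₁ generalizing cfg with
  | nil => simp [ValidSeq, run]
  | cons v l ih => simp only [List.cons_append, ValidSeq, run_cons, ih, and_assoc]

lemma IsOriented.updateSet {cfg : FanConfig I S} (hor : net.IsOriented cfg) (v : I) :
    net.IsOriented (net.updateSet {v} cfg) := by
  intro i j hij
  simp only [updateSet_singleton_snd, or_comm (a := j = v ∧ _), hor i j hij]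
  split_ifs <;> simp

lemma IsOriented.not_adj_of_applicable {cfg : FanConfig I S} (hor : net.IsOriented cfg)
    {v w : I} (hv : net.Applicable cfg v) (hw : net.Applicable cfg w) : ¬ net.G.Adj v w :=
  fun hvw => by simpa [hor v w hvw, hv w hvw.symm] using hw v hvw

lemma IsLocal.flip_updateSet_of_not_adj (hloc : net.IsLocal) {v w : I} (hwv : w ≠ v)
    (hvw : ¬ net.G.Adj v w) (cfg : FanConfig I S) :
    net.flip w (net.updateSet {v} cfg).1 = net.flip w cfg.1 := by
  refine hloc w _ _ ?_ fun u hu => ?_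
  · simp [updateSet_singleton_fst, hwv]
  · simp [updateSet_singleton_fst, show u ≠ v by rintro rfl; exact hvw hu]

lemma Applicable.updateSet_of_not_adj {cfg : FanConfig I S} {v w : I}
    (hw : net.Applicable cfg w) (hwv : w ≠ v) (hvw : ¬ net.G.Adj v w) :
    net.Applicable (net.updateSet {v} cfg) w := by
  intro u hu
  have hu' : u ≠ v := by rintro rfl; exact hvw hu
  simp [updateSet_singleton_snd, hu', hwv, hw u hu]

lemma updateSet_comm_of_applicable (hloc : net.IsLocal) {cfg : FanConfig I S}
    (hor : net.IsOriented cfg) {v w : I} (hv : net.Applicable cfg v)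
    (hw : net.Applicable cfg w) (hvw : v ≠ w) :
    net.updateSet {w} (net.updateSet {v} cfg) = net.updateSet {v} (net.updateSet {w} cfg) := by
  have hnadj := hor.not_adj_of_applicable hv hw
  have fw := hloc.flip_updateSet_of_not_adj hvw.symm hnadj cfg
  have fv := hloc.flip_updateSet_of_not_adj hvw (fun h => hnadj h.symm) cfg
  refine Prod.ext (funext fun i => ?_) (funext fun i => funext fun j => ?_)
  · simp only [updateSet_singleton_fst, fw, fv]
    split_ifs <;> simp_all
  · simp only [updateSet_singleton_snd, fw, fv]
    split_ifs <;> simp_all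

lemma validSeq_updateSet_and_run_updateSet (hloc : net.IsLocal) {l : List I} {w : I}
    (hwl : w ∉ l) {cfg : FanConfig I S} (hor : net.IsOriented cfg)
    (hw : net.Applicable cfg w) (hl : net.ValidSeq cfg l) :
    net.ValidSeq (net.updateSet {w} cfg) l ∧
      net.run l (net.updateSet {w} cfg) = net.updateSet {w} (net.run l cfg) := by
  induction l generalizing cfg with
  | nil => exact ⟨trivial, rfl⟩
  | cons v l ih =>
    obtain ⟨hv, hl⟩ := hl
    have hvw : v ≠ w := by rintro rfl; exact hwl List.mem_cons_self
    have hnadj := hor.not_adj_of_applicable hv hw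
    have hcomm := updateSet_comm_of_applicable hloc hor hv hw hvw
    obtain ⟨ih_valid, ih_run⟩ := ih (fun h => hwl (List.mem_cons_of_mem v h))
      (hor.updateSet v) (hw.updateSet_of_not_adj hvw.symm hnadj) hl
    refine ⟨⟨hv.updateSet_of_not_adj hvw (fun h => hnadj h.symm), hcomm ▸ ih_valid⟩, ?_⟩
    rw [run_cons, ← hcomm, ih_run, run_cons]

lemma validSeq_cons_and_run_cons_of_validSeq_append_cons (hloc : net.IsLocal)
    {l₁ l₂ : List I} {w : I} (hwl : w ∉ l₁) {cfg : FanConfig I S} (hor : net.IsOriented cfg)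
    (hw : net.Applicable cfg w) (hl : net.ValidSeq cfg (l₁ ++ w :: l₂)) :
    net.ValidSeq cfg (w :: (l₁ ++ l₂)) ∧
      net.run (l₁ ++ w :: l₂) cfg = net.run (w :: (l₁ ++ l₂)) cfg := by
  obtain ⟨hl₁, -, hl₂⟩ := validSeq_append.mp hl
  obtain ⟨hl₁', hrun⟩ := validSeq_updateSet_and_run_updateSet hloc hwl hor hw hl₁
  refine ⟨⟨hw, validSeq_append.mpr ⟨hl₁', hrun ▸ hl₂⟩⟩, ?_⟩
  rw [run_append, run_cons, run_cons, run_append, hrun]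

lemma run_eq_of_perm (hloc : net.IsLocal) {l₁ l₂ : List I} (hperm : l₁.Perm l₂)
    {cfg : FanConfig I S} (hor : net.IsOriented cfg) (h₁ : net.ValidSeq cfg l₁)
    (h₂ : net.ValidSeq cfg l₂) : net.run l₁ cfg = net.run l₂ cfg := by
  induction l₂ generalizing l₁ cfg with
  | nil => rw [List.perm_nil.mp hperm]
  | cons w l₂ ih =>
    obtain ⟨hw, h₂⟩ := h₂
    obtain ⟨a, b, rfl, hwa⟩ := List.eq_append_cons_of_mem (hperm.mem_iff.mpr List.mem_cons_self)
    obtain ⟨⟨-, h₁⟩, hrun⟩ :=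
      validSeq_cons_and_run_cons_of_validSeq_append_cons hloc hwa hor hw h₁
    rw [hrun, run_cons, run_cons]
    exact ih (List.perm_middle.symm.trans hperm).cons_inv (hor.updateSet w) h₁ h₂

end FAN

theorem fan_multiset_invariance_general {I S : Type*} (net : FAN I S)
    (hloc : ∀ i (s s' : I → S), s i = s' i → (∀ u, net.G.Adj u i → s u = s' u) →
      net.flip i s = net.flip i s')
    (cfg : FanConfig I S)
    (hor : ∀ i j, net.G.Adj i j → cfg.2 i j = !cfg.2 j i)
    (l₁ l₂ : List I)
    (h₁ : net.ValidSeq cfg l₁) (h₂ : net.ValidSeq cfg l₂)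
    (hm : (l₁ : Multiset I) = (l₂ : Multiset I)) :
    net.run l₁ cfg = net.run l₂ cfg :=
  FAN.run_eq_of_perm hloc (Multiset.coe_eq_coe.mp hm) hor h₁ h₂

/-- If two finite sequential update schedules consist of applicable-node updates and the
multisets of updated nodes are equal, then the resulting configurations are equal. -/
theorem fan_multiset_invariance {I S : Type*} (net : FAN I S)
    (hloc : ∀ i (s s' : I → S), s i = s' i → (∀ u, net.G.Adj u i → s u = s' u) →
      net.flip i s = net.flip i s')
    (hlf : ∀ v, (net.G.neighborSet v).Finite)
    (cfg : FanConfig I S)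
    (hor : ∀ i j, net.G.Adj i j → cfg.2 i j = !cfg.2 j i)
    (l₁ l₂ : List I)
    (h₁ : net.ValidSeq cfg l₁) (h₂ : net.ValidSeq cfg l₂)
    (hm : (l₁ : Multiset I) = (l₂ : Multiset I)) :
    net.run l₁ cfg = net.run l₂ cfg :=
  fan_multiset_invariance_general net hloc cfg hor l₁ l₂ h₁ h₂ hm
end

section
/- A global transition function G of a cellular automaton is commutative (i.e., G_A ∘ G_B = G_{A∪B} = G_B ∘ G_A for all disjoint update sets A, B of active cells) if and only if for all pairs of distinct cells i, j that are active on a configuration c, G_{{i}}(G_{{j}}(c)) = G_{{i,j}}(c). -/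
open scoped Classical

/-- Partial update: apply the global transition function only to cells in `D`. -/
noncomputable def applyOn {d : ℕ} {S : Type*}
    (G : ((Fin d → ℤ) → S) → (Fin d → ℤ) → S) (D : Set (Fin d → ℤ))
    (c : (Fin d → ℤ) → S) : (Fin d → ℤ) → S :=
  fun i => if i ∈ D then G c i else c i

/-- A cell is active on `c` if updating it changes its state. -/
def ActiveCell {d : ℕ} {S : Type*}
    (G : ((Fin d → ℤ) → S) → (Fin d → ℤ) → S) (c : (Fin d → ℤ) → S)
    (i : Fin d → ℤ) : Prop :=
  G c i ≠ c i

lemma key_lemma {d : ℕ} {S : Type*}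
    (G : ((Fin d → ℤ) → S) → (Fin d → ℤ) → S)
    (hp : ∀ (c : (Fin d → ℤ) → S) (i j : Fin d → ℤ), i ≠ j →
        ActiveCell G c i → ActiveCell G c j →
        applyOn G {i} (applyOn G {j} c) = applyOn G {i, j} c)
    (c : (Fin d → ℤ) → S) (F : Finset (Fin d → ℤ))
    (hF : ∀ j ∈ F, ActiveCell G c j) :
    ∀ y, ActiveCell G c y → y ∉ F → G (applyOn G (↑F) c) y = G c y := by
  classical
  induction F using Finset.induction_on with
  | empty =>
    intro y _ _
    have : applyOn G (↑(∅ : Finset (Fin d → ℤ))) c = c := by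
      funext z; simp [applyOn]
    rw [this]
  | @insert j F' hjF' ih =>
    intro y hy hyF
    have hj : ActiveCell G c j := hF j (Finset.mem_insert_self _ _)
    have hF' : ∀ k ∈ F', ActiveCell G c k := fun k hk =>
      hF k (Finset.mem_insert_of_mem hk)
    have ihj : G (applyOn G (↑F') c) j = G c j := ih hF' j hj hjF'
    have hstep : applyOn G (↑(insert j F') : Set (Fin d → ℤ)) c
        = applyOn G {j} (applyOn G (↑F') c) := by
      funext z
      by_cases hzj : z = j
      · subst hzj
        simp [applyOn, hjF', ihj]
      · by_cases hzF : z ∈ F' <;> simp [applyOn, hzj, hzF]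
    have hyj : y ≠ j := fun h => hyF (h ▸ Finset.mem_insert_self _ _)
    have hyF' : y ∉ F' := fun h => hyF (Finset.mem_insert_of_mem h)
    have hcF'y : (applyOn G (↑F') c) y = c y := by
      simp [applyOn, hyF']
    have hcF'j : (applyOn G (↑F') c) j = c j := by
      simp [applyOn, hjF']
    have hy' : ActiveCell G (applyOn G (↑F') c) y := by
      unfold ActiveCell
      rw [ih hF' y hy hyF', hcF'y]; exact hy
    have hj' : ActiveCell G (applyOn G (↑F') c) j := by
      unfold ActiveCell
      rw [ihj, hcF'j]; exact hj
    have hcomm := hp (applyOn G (↑F') c) y j hyj hy' hj'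
    have := congrFun hcomm y
    simp only [applyOn, Set.mem_singleton_iff, Set.mem_insert_iff, eq_self_iff_true,
      if_true, true_or] at this
    rw [hstep, this, ih hF' y hy hyF']

lemma half_lemma {d : ℕ} {S : Type*}
    (G : ((Fin d → ℤ) → S) → (Fin d → ℤ) → S)
    (N : Finset (Fin d → ℤ))
    (hloc : ∀ (c c' : (Fin d → ℤ) → S) (i : Fin d → ℤ),
      (∀ n ∈ N, c (i + n) = c' (i + n)) → G c i = G c' i)
    (hp : ∀ (c : (Fin d → ℤ) → S) (i j : Fin d → ℤ), i ≠ j →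
        ActiveCell G c i → ActiveCell G c j →
        applyOn G {i} (applyOn G {j} c) = applyOn G {i, j} c)
    (c : (Fin d → ℤ) → S) (A B : Set (Fin d → ℤ)) (hAB : Disjoint A B)
    (hA : ∀ i ∈ A, ActiveCell G c i) (hB : ∀ i ∈ B, ActiveCell G c i) :
    applyOn G A (applyOn G B c) = applyOn G (A ∪ B) c := by
  classical
  funext x
  by_cases hxA : x ∈ A
  · have hxB : x ∉ B := fun h => (hAB.ne_of_mem hxA h) rfl
    set F : Finset (Fin d → ℤ) := (N.image (fun n => x + n)).filter (· ∈ B) with hFdef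
    have hFB : ∀ k ∈ F, k ∈ B := fun k hk => (Finset.mem_filter.mp hk).2
    have hagree : ∀ n ∈ N, applyOn G B c (x + n) = applyOn G (↑F) c (x + n) := by
      intro n hn
      by_cases h : x + n ∈ B
      · have hmF : x + n ∈ F := Finset.mem_filter.mpr
          ⟨Finset.mem_image.mpr ⟨n, hn, rfl⟩, h⟩
        simp [applyOn, h, hmF]
      · have hmF : x + n ∉ F := fun hc => h (hFB _ hc)
        simp [applyOn, h, hmF]
    have h1 : G (applyOn G B c) x = G (applyOn G (↑F) c) x := hloc _ _ x hagree
    have h2 : G (applyOn G (↑F) c) x = G c x :=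
      key_lemma G hp c F (fun j hj => hB j (hFB j hj)) x (hA x hxA)
        (fun h => hxB (hFB x h))
    simp only [applyOn, if_pos hxA, if_pos (Set.mem_union_left B hxA)]
    rw [h1, h2]
  · by_cases hxB : x ∈ B
    · simp [applyOn, hxA, hxB]
    · have : x ∉ A ∪ B := by simp [hxA, hxB]
      simp [applyOn, hxA, hxB, this]

/-- A global transition function (given cellwise by a local rule with finite
neighborhood `N`) is commutative iff the commutation condition holds on all singleton
update sets of active cells. -/
theorem commutative_iff_pairwise {d : ℕ} {S : Type*}
    (G : ((Fin d → ℤ) → S) → (Fin d → ℤ) → S)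
    (N : Finset (Fin d → ℤ))
    (hloc : ∀ (c c' : (Fin d → ℤ) → S) (i : Fin d → ℤ),
      (∀ n ∈ N, c (i + n) = c' (i + n)) → G c i = G c' i) :
    (∀ (c : (Fin d → ℤ) → S) (A B : Set (Fin d → ℤ)), Disjoint A B →
        (∀ i ∈ A, ActiveCell G c i) → (∀ i ∈ B, ActiveCell G c i) →
        applyOn G A (applyOn G B c) = applyOn G (A ∪ B) c ∧
        applyOn G B (applyOn G A c) = applyOn G (A ∪ B) c) ↔
    (∀ (c : (Fin d → ℤ) → S) (i j : Fin d → ℤ), i ≠ j →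
        ActiveCell G c i → ActiveCell G c j →
        applyOn G {i} (applyOn G {j} c) = applyOn G {i, j} c) := by
  constructor
  · intro h c i j hij hi hj
    have hd : Disjoint ({i} : Set (Fin d → ℤ)) {j} := by
      simp [Set.disjoint_singleton_left, hij]
    obtain ⟨h1, _⟩ := h c {i} {j} hd (by simpa using hi) (by simpa using hj)
    rw [h1, Set.singleton_union]
  · intro hp c A B hAB hA hB
    refine ⟨half_lemma G N hloc hp c A B hAB hA hB, ?_⟩
    rw [Set.union_comm]
    exact half_lemma G N hloc hp c B A hAB.symm hB hA
end

section
/- The asynchronous elementary cellular automaton Rule 212 is commutative: for any configuration c and any two distinct cells i, j that are both active on c, updating i then j yields the same result as updating j then i, which equals updating {i, j} simultaneously. -/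
open scoped Classical

/-- The local rule of elementary cellular automaton Rule 212. -/
def rule212 (a b c : Fin 2) : Fin 2 :=
  if a = 1 ∧ b = 0 ∧ c = 0 then 1
  else if a = 0 ∧ b = 1 ∧ c = 1 then 0
  else b

/-- Partial asynchronous update of Rule 212 on an update set `D`. -/
noncomputable def update212 (D : Set ℤ) (c : ℤ → Fin 2) : ℤ → Fin 2 :=
  fun i => if i ∈ D then rule212 (c (i - 1)) (c i) (c (i + 1)) else c i

/-- A cell is active if applying the rule changes its state. -/
def active212 (c : ℤ → Fin 2) (i : ℤ) : Prop :=
  rule212 (c (i - 1)) (c i) (c (i + 1)) ≠ c i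

lemma rule212_adj : ∀ a b c d : Fin 2,
    rule212 a b c ≠ b → rule212 b c d ≠ c → False := by decide

lemma active_not_adj (c : ℤ → Fin 2) (i : ℤ)
    (hi : active212 c i) (hj : active212 c (i + 1)) : False := by
  have hj' : rule212 (c i) (c (i + 1)) (c (i + 1 + 1)) ≠ c (i + 1) := by
    simpa [active212, add_sub_cancel_right] using hj
  exact rule212_adj _ _ _ _ hi hj'

lemma update_comm (c : ℤ → Fin 2) (i j : ℤ) (hij : i ≠ j)
    (h1 : j ≠ i + 1) (h2 : j ≠ i - 1) :
    update212 {i} (update212 {j} c) = update212 {i, j} c := by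
  funext x
  simp only [update212, Set.mem_singleton_iff, Set.mem_insert_iff]
  by_cases hx : x = i
  · subst hx
    have e1 : ¬ (x - 1 = j) := fun h => h2 h.symm
    have e2 : ¬ (x + 1 = j) := fun h => h1 h.symm
    have e3 : ¬ (x = j) := hij
    simp [e1, e2, e3]
  · by_cases hx' : x = j
    · subst hx'
      simp [hx, Ne.symm hx]
    · simp [hx, hx']

/-- Rule 212 is commutative: for distinct active cells `i, j`, updating `i` then `j`
equals updating `j` then `i`, which equals updating `{i, j}` simultaneously. -/
theorem rule212_commutative (c : ℤ → Fin 2) (i j : ℤ) (hij : i ≠ j)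
    (hi : active212 c i) (hj : active212 c j) :
    update212 {i} (update212 {j} c) = update212 {i, j} c ∧
    update212 {j} (update212 {i} c) = update212 {i, j} c := by
  have h1 : j ≠ i + 1 := fun h => active_not_adj c i hi (h ▸ hj)
  have h2 : i ≠ j + 1 := fun h => active_not_adj c j hj (h ▸ hi)
  have h2' : j ≠ i - 1 := fun h => h2 (by omega)
  have h1' : i ≠ j - 1 := fun h => h1 (by omega)
  refine ⟨update_comm c i j hij h1 h2', ?_⟩
  rw [Set.pair_comm]
  exact update_comm c j i (Ne.symm hij) h2 h1'
end

section
/- Every finite-state automaton A = (Q, Σ, δ, q₀, F) can be simulated by a one-way asynchronous cellular automaton in the following sense: with the input w of length n encoded at positions 1..n and all other cells in state (q₀, ∅), under any fair update schedule the system reaches a configuration in which cell n holds the state δ*(q₀, w) (the state of A after reading w), and at every time step at most one cell is active. -/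
open scoped Classical

/-- States of the one-way ACA simulating a finite-state automaton:
either a pair (automaton state, last consumed letter or ∅), or an input letter. -/
abbrev FsaState (Q σ : Type*) := (Q × Option σ) ⊕ σ

/-- The one-way local rule: a tuple cell with a letter on its right... here the rule is
`f(left, self)`: a letter cell whose left neighbor is a tuple `(q, s)` becomes
`(δ q letter, letter)`; cells in non-letter states never change. -/
def fsaRule {Q σ : Type*} (δ : Q → σ → Q) :
    FsaState Q σ → FsaState Q σ → FsaState Q σ
  | Sum.inl (q, _), Sum.inr s' => Sum.inl (δ q s', some s')
  | _, y => y

/-- Initial configuration: the input word `w` at positions `1..n`, `(q₀, ∅)` elsewhere. -/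
def fsaInit {Q σ : Type*} (q0 : Q) (w : List σ) : ℤ → FsaState Q σ :=
  fun i =>
    if 1 ≤ i then
      match w[(i - 1).toNat]? with
      | some s => Sum.inr s
      | none => Sum.inl (q0, none)
    else Sum.inl (q0, none)

/-- Trajectory under an asynchronous update schedule `ζ`. -/
noncomputable def fsaTraj {Q σ : Type*} (δ : Q → σ → Q) (ζ : ℕ → Set ℤ)
    (c0 : ℤ → FsaState Q σ) : ℕ → ℤ → FsaState Q σ
  | 0 => c0
  | t + 1 => fun i =>
      if i ∈ ζ t then fsaRule δ (fsaTraj δ ζ c0 t (i - 1)) (fsaTraj δ ζ c0 t i)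
      else fsaTraj δ ζ c0 t i

/-- A cell is active if updating it changes its state. -/
def fsaActive {Q σ : Type*} (δ : Q → σ → Q) (c : ℤ → FsaState Q σ) (i : ℤ) : Prop :=
  fsaRule δ (c (i - 1)) (c i) ≠ c i

section Aux

variable {Q σ : Type*} (δ : Q → σ → Q) (q0 : Q) (w : List σ)

lemma fsaRule_inl (x : FsaState Q σ) (c : Q × Option σ) :
    fsaRule δ x (Sum.inl c) = Sum.inl c := by
  rcases x with ⟨q, s⟩ | s <;> rfl

lemma fsaRule_inr_inr (a b : σ) :
    fsaRule δ (Sum.inr a) (Sum.inr b) = Sum.inr b := rfl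

lemma fsaRule_inl_inr (q : Q) (o : Option σ) (s : σ) :
    fsaRule δ (Sum.inl (q, o)) (Sum.inr s) = Sum.inl (δ q s, some s) := rfl

/-- Canonical configuration after the first `k` letters have been consumed. -/
def fsaCfg (k : ℕ) : ℤ → FsaState Q σ := fun i =>
  if 1 ≤ i ∧ i ≤ (k : ℤ) then
    Sum.inl (List.foldl δ q0 (w.take i.toNat), w[(i - 1).toNat]?)
  else fsaInit q0 w i

lemma fsaCfg_zero : fsaCfg δ q0 w 0 = fsaInit q0 w := by
  funext i
  unfold fsaCfg
  rw [if_neg (by omega)]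

lemma fsaCfg_left (k : ℕ) :
    ∃ o, fsaCfg δ q0 w k (k : ℤ) = Sum.inl (List.foldl δ q0 (w.take k), o) := by
  rcases Nat.eq_zero_or_pos k with h | h
  · subst h
    exact ⟨none, by simp [fsaCfg, fsaInit]⟩
  · refine ⟨w[((k : ℤ) - 1).toNat]?, ?_⟩
    unfold fsaCfg
    rw [if_pos ⟨by omega, le_refl _⟩]
    simp

lemma fsaCfg_self (k : ℕ) (hk : k < w.length) :
    fsaCfg δ q0 w k ((k : ℤ) + 1) = Sum.inr w[k] := by
  unfold fsaCfg fsaInit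
  rw [if_neg (by omega), if_pos (by omega)]
  have h3 : ((k : ℤ) + 1 - 1).toNat = k := by omega
  rw [h3, List.getElem?_eq_getElem hk]

lemma fsaCfg_succ_eq (k : ℕ) (i : ℤ) (h : i ≠ (k : ℤ) + 1) :
    fsaCfg δ q0 w (k + 1) i = fsaCfg δ q0 w k i := by
  unfold fsaCfg
  by_cases h1 : 1 ≤ i ∧ i ≤ (k : ℤ)
  · rw [if_pos h1, if_pos (by omega)]
  · rw [if_neg h1, if_neg (by omega)]

lemma fsaRule_cfg (k : ℕ) (i : ℤ) :
    fsaRule δ (fsaCfg δ q0 w k (i - 1)) (fsaCfg δ q0 w k i) =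
      if i = (k : ℤ) + 1 ∧ k < w.length then fsaCfg δ q0 w (k + 1) i
      else fsaCfg δ q0 w k i := by
  by_cases hcase : i = (k : ℤ) + 1 ∧ k < w.length
  · rw [if_pos hcase]
    obtain ⟨h1, hk⟩ := hcase
    subst h1
    obtain ⟨o, ho⟩ := fsaCfg_left δ q0 w k
    have hsub : (k : ℤ) + 1 - 1 = (k : ℤ) := by ring
    rw [hsub, ho, fsaCfg_self δ q0 w k hk, fsaRule_inl_inr]
    unfold fsaCfg
    rw [if_pos (by constructor <;> omega)]
    have h2 : ((k : ℤ) + 1).toNat = k + 1 := by omega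
    have h3 : ((k : ℤ) + 1 - 1).toNat = k := by omega
    have h4 : w.take (k + 1) = w.take k ++ [w[k]] := by
      rw [List.take_succ, List.getElem?_eq_getElem hk]
      rfl
    rw [h2, h3, h4, List.foldl_append, List.foldl_cons, List.foldl_nil,
      List.getElem?_eq_getElem hk]
  · rw [if_neg hcase]
    rcases le_or_gt i (k : ℤ) with hik | hik
    · obtain ⟨c, hc⟩ : ∃ c, fsaCfg δ q0 w k i = Sum.inl c := by
        unfold fsaCfg fsaInit
        by_cases h1 : 1 ≤ i ∧ i ≤ (k : ℤ)
        · rw [if_pos h1]; exact ⟨_, rfl⟩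
        · rw [if_neg h1, if_neg (by omega)]; exact ⟨_, rfl⟩
      rw [hc, fsaRule_inl]
    · have hi1 : 1 ≤ i := by omega
      have hself : fsaCfg δ q0 w k i = fsaInit q0 w i := by
        unfold fsaCfg; rw [if_neg (by omega)]
      rw [hself]
      rcases hw : w[(i - 1).toNat]? with _ | s
      · have hval : fsaInit q0 w i = Sum.inl (q0, none) := by
          unfold fsaInit; rw [if_pos hi1, hw]
        rw [hval, fsaRule_inl]
      · have hlen : (i - 1).toNat < w.length := by
          by_contra h
          rw [List.getElem?_eq_none (by omega)] at hw
          exact absurd hw (by simp)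
        have hik2 : (k : ℤ) + 2 ≤ i := by
          by_contra h
          exact hcase ⟨by omega, by omega⟩
        have hlen2 : (i - 2).toNat < w.length := by omega
        have hleft : fsaCfg δ q0 w k (i - 1) = Sum.inr (w[(i - 2).toNat]) := by
          unfold fsaCfg fsaInit
          rw [if_neg (by omega), if_pos (by omega),
            show i - 1 - 1 = i - 2 by ring, List.getElem?_eq_getElem hlen2]
        have hval : fsaInit q0 w i = Sum.inr s := by
          unfold fsaInit; rw [if_pos hi1, hw]
        rw [hleft, hval, fsaRule_inr_inr]

variable (ζ : ℕ → Set ℤ)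

lemma fsaStep (t : ℕ) (k : ℕ)
    (h : fsaTraj δ ζ (fsaInit q0 w) t = fsaCfg δ q0 w k) :
    fsaTraj δ ζ (fsaInit q0 w) (t + 1) =
      if (k : ℤ) + 1 ∈ ζ t ∧ k < w.length then fsaCfg δ q0 w (k + 1)
      else fsaCfg δ q0 w k := by
  by_cases hz : (k : ℤ) + 1 ∈ ζ t ∧ k < w.length
  · rw [if_pos hz]
    funext i
    show (if i ∈ ζ t then _ else _) = _
    rw [h]
    by_cases hi : i ∈ ζ t
    · rw [if_pos hi, fsaRule_cfg]
      by_cases hik : i = (k : ℤ) + 1 ∧ k < w.length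
      · rw [if_pos hik]
      · rw [if_neg hik, fsaCfg_succ_eq δ q0 w k i (fun him => hik ⟨him, hz.2⟩)]
    · rw [if_neg hi, fsaCfg_succ_eq δ q0 w k i (fun him => hi (him ▸ hz.1))]
  · rw [if_neg hz]
    funext i
    show (if i ∈ ζ t then _ else _) = _
    rw [h]
    by_cases hi : i ∈ ζ t
    · rw [if_pos hi, fsaRule_cfg,
        if_neg (fun hik : i = (k : ℤ) + 1 ∧ k < w.length => hz ⟨hik.1 ▸ hi, hik.2⟩)]
    · rw [if_neg hi]

lemma fsaExistsCfg (t : ℕ) :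
    ∃ k, k ≤ w.length ∧ fsaTraj δ ζ (fsaInit q0 w) t = fsaCfg δ q0 w k := by
  induction t with
  | zero => exact ⟨0, Nat.zero_le _, (fsaCfg_zero δ q0 w).symm⟩
  | succ t ih =>
    obtain ⟨k, hk, h⟩ := ih
    rw [fsaStep δ q0 w ζ t k h]
    by_cases hc : (k : ℤ) + 1 ∈ ζ t ∧ k < w.length
    · exact ⟨k + 1, by omega, by rw [if_pos hc]⟩
    · exact ⟨k, hk, by rw [if_neg hc]⟩

lemma fsaMono (t s : ℕ) (hts : t ≤ s) (k : ℕ) (hkn : k ≤ w.length)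
    (h : fsaTraj δ ζ (fsaInit q0 w) t = fsaCfg δ q0 w k) :
    ∃ k', k ≤ k' ∧ k' ≤ w.length ∧
      fsaTraj δ ζ (fsaInit q0 w) s = fsaCfg δ q0 w k' := by
  induction s, hts using Nat.le_induction with
  | base => exact ⟨k, le_refl _, hkn, h⟩
  | succ s hts ih =>
    obtain ⟨k', hk', hk'n, h'⟩ := ih
    rw [fsaStep δ q0 w ζ s k' h']
    by_cases hc : (k' : ℤ) + 1 ∈ ζ s ∧ k' < w.length
    · exact ⟨k' + 1, by omega, by omega, by rw [if_pos hc]⟩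
    · exact ⟨k', hk', hk'n, by rw [if_neg hc]⟩

lemma fsaProgress (hfair : ∀ i : ℤ, {t | i ∈ ζ t}.Infinite) :
    ∀ j, j ≤ w.length →
      ∃ t k, j ≤ k ∧ k ≤ w.length ∧
        fsaTraj δ ζ (fsaInit q0 w) t = fsaCfg δ q0 w k := by
  intro j
  induction j with
  | zero => exact fun _ => ⟨0, 0, le_refl _, Nat.zero_le _, (fsaCfg_zero δ q0 w).symm⟩
  | succ j ih =>
    intro hj
    obtain ⟨t, k, hk, hkn, h⟩ := ih (by omega)
    by_cases hkk : j + 1 ≤ k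
    · exact ⟨t, k, hkk, hkn, h⟩
    · have hkj : j = k := by omega
      subst hkj
      obtain ⟨t', ht', htt'⟩ := (hfair ((j : ℤ) + 1)).exists_gt t
      obtain ⟨k', hk', hk'n, h'⟩ := fsaMono δ q0 w ζ t t' (le_of_lt htt') j hkn h
      by_cases hkk' : j + 1 ≤ k'
      · exact ⟨t', k', hkk', hk'n, h'⟩
      · have hkj' : k' = j := by omega
        subst hkj'
        refine ⟨t' + 1, k' + 1, le_refl _, by omega, ?_⟩
        rw [fsaStep δ q0 w ζ t' k' h', if_pos ⟨ht', by omega⟩]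

end Aux

/-- The one-way ACA simulates the finite-state automaton `(Q, Σ, δ, q₀, F)`: at every
time step at most one cell is active, and under any fair schedule the system reaches a
configuration in which cell `n` holds the state `δ*(q₀, w)`. -/
theorem oneway_aca_simulates_fsa {Q σ : Type*} [Finite Q] [Finite σ]
    (δ : Q → σ → Q) (q0 : Q) (F : Set Q) (w : List σ)
    (ζ : ℕ → Set ℤ) (hfair : ∀ i : ℤ, {t | i ∈ ζ t}.Infinite) :
    (∀ t, {i | fsaActive δ (fsaTraj δ ζ (fsaInit q0 w) t) i}.Subsingleton) ∧
    (∃ (t : ℕ) (s : Option σ),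
      fsaTraj δ ζ (fsaInit q0 w) t (w.length : ℤ) = Sum.inl (w.foldl δ q0, s)) := by
  constructor
  · intro t
    obtain ⟨k, hk, h⟩ := fsaExistsCfg δ q0 w ζ t
    have key : ∀ m : ℤ, fsaActive δ (fsaTraj δ ζ (fsaInit q0 w) t) m →
        m = (k : ℤ) + 1 := by
      intro m hm
      unfold fsaActive at hm
      rw [h, fsaRule_cfg] at hm
      by_contra hne
      rw [if_neg (fun hc => hne hc.1)] at hm
      exact hm rfl
    intro i hi j hj
    rw [key i hi, key j hj]
  · obtain ⟨t, k, hk1, hk2, h⟩ := fsaProgress δ q0 w ζ hfair w.length (le_refl _)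
    have hkk : k = w.length := le_antisymm hk2 hk1
    subst hkk
    rcases Nat.eq_zero_or_pos w.length with h0 | h0
    · refine ⟨t, none, ?_⟩
      rw [h]
      have hw : w = [] := List.length_eq_zero_iff.mp h0
      subst hw
      simp [fsaCfg, fsaInit]
    · refine ⟨t, w[((w.length : ℤ) - 1).toNat]?, ?_⟩
      rw [h]
      unfold fsaCfg
      rw [if_pos ⟨by omega, le_refl _⟩]
      have h1 : ((w.length : ℤ)).toNat = w.length := by omega
      rw [h1, List.take_length]
end

section
/- In the shifting mountain-valley ACA B (with tertiary timers), no two neighboring cells can be simultaneously active on any configuration where neighboring cells never carry equal timer values. -/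
/-- States of the shifting mountain-valley ACA: simulated state plus tertiary timer
(`0, 1, 2 : Fin 3` encode timer values `1, 2, 3`). -/
abbrev MVState (q : ℕ) := ZMod q × Fin 3

/-- The local rule: active transitions only of the forms `(·2,·1,·2) ↦ ·3`,
`(·3,·2,·3) ↦ ·1`, `(·1,·3,·1) ↦ ·2`; otherwise the cell does not change. -/
def mvRule {q : ℕ} (f : ZMod q → ZMod q → ZMod q → ZMod q)
    (x y z : MVState q) : MVState q :=
  if x.2 = 1 ∧ y.2 = 0 ∧ z.2 = 1 then (x.1 + z.1, 2)
  else if x.2 = 2 ∧ y.2 = 1 ∧ z.2 = 2 then (f (x.1 - y.1) y.1 (z.1 - y.1), 0)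
  else if x.2 = 0 ∧ y.2 = 2 ∧ z.2 = 0 then (z.1, 1)
  else y

/-- A cell is active if applying the rule changes its state. -/
def mvActive {q : ℕ} (f : ZMod q → ZMod q → ZMod q → ZMod q)
    (c : ℤ → MVState q) (i : ℤ) : Prop :=
  mvRule f (c (i - 1)) (c i) (c (i + 1)) ≠ c i

/-- In the shifting mountain-valley ACA, on any configuration in which neighboring
cells never carry equal timer values, no two neighboring cells can be simultaneously
active. -/
theorem mv_no_adjacent_active {q : ℕ}
    (f : ZMod q → ZMod q → ZMod q → ZMod q) (c : ℤ → MVState q)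
    (htimer : ∀ i : ℤ, (c i).2 ≠ (c (i + 1)).2) (i : ℤ) :
    ¬ (mvActive f c i ∧ mvActive f c (i + 1)) := by
  rintro ⟨h1, h2⟩
  unfold mvActive mvRule at h1 h2
  have e : i + 1 - 1 = i := by ring
  rw [e] at h2
  split_ifs at h1 with a1 a2 a3 <;> split_ifs at h2 with b1 b2 b3 <;> simp_all
end

section
/- In the simulation of Rule 212 as a mountain-valley landscape, the edge-orientation map ψ (pointing from i to i+1 iff states differ, from i+1 to i iff states equal) turns each configuration into a valid FAN configuration, and a synchronous update of all active cells corresponds exactly to flipping all edges incident to applicable nodes. -/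
open scoped Classical

/-- Orientation `ψ` on the edge between `i` and `i+1`: the arrow points right
(toward `i+1`) iff the states differ. -/
def pointsRight (c : ℤ → Fin 2) (i : ℤ) : Prop := c i ≠ c (i + 1)

/-- Node `i` is applicable in the dual FAN: both incident arrows point to it, i.e. the
left arrow points right (`c (i-1) ≠ c i`) and the right arrow points left
(`c i = c (i+1)`). -/
def applicable212 (c : ℤ → Fin 2) (i : ℤ) : Prop :=
  c (i - 1) ≠ c i ∧ c i = c (i + 1)

/-- Synchronous update of all active cells. -/
noncomputable def sync212 (c : ℤ → Fin 2) : ℤ → Fin 2 :=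
  fun i => if active212 c i then rule212 (c (i - 1)) (c i) (c (i + 1)) else c i

lemma sync212_eq (c : ℤ → Fin 2) (i : ℤ) :
    sync212 c i = rule212 (c (i - 1)) (c i) (c (i + 1)) := by
  unfold sync212 active212
  split
  · rfl
  · next h => exact (not_not.mp h).symm

lemma key212 (a b d e : Fin 2) :
    ((rule212 a b d ≠ b) ↔ (a ≠ b ∧ b = d)) ∧
    (((a ≠ b ∧ b = d) ∨ (b ≠ d ∧ d = e)) → ((rule212 a b d ≠ rule212 b d e) ↔ ¬ (b ≠ d))) ∧
    (¬((a ≠ b ∧ b = d) ∨ (b ≠ d ∧ d = e)) → ((rule212 a b d ≠ rule212 b d e) ↔ (b ≠ d))) := by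
  revert a b d e; decide

/-- The orientation map `ψ` turns Rule 212 into a FAN: a cell is active iff its node is
applicable, and a synchronous update of all active cells flips exactly the edges
incident to applicable nodes. -/
theorem rule212_fan_duality (c : ℤ → Fin 2) :
    (∀ i : ℤ, active212 c i ↔ applicable212 c i) ∧
    (∀ i : ℤ, (applicable212 c i ∨ applicable212 c (i + 1)) →
      (pointsRight (sync212 c) i ↔ ¬ pointsRight c i)) ∧
    (∀ i : ℤ, ¬ (applicable212 c i ∨ applicable212 c (i + 1)) →
      (pointsRight (sync212 c) i ↔ pointsRight c i)) := by
  have h1 : (i : ℤ) → i + 1 - 1 = i := fun i => by ring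
  have h2 : (i : ℤ) → i + 1 + 1 = i + 2 := fun i => by ring
  have hpr : ∀ i : ℤ, pointsRight (sync212 c) i ↔
      (rule212 (c (i - 1)) (c i) (c (i + 1)) ≠ rule212 (c i) (c (i + 1)) (c (i + 2))) := by
    intro i
    rw [pointsRight, sync212_eq, sync212_eq, h1, h2]
  have happ : ∀ i : ℤ, applicable212 c (i + 1) ↔ (c i ≠ c (i + 1) ∧ c (i + 1) = c (i + 2)) := by
    intro i
    rw [applicable212, h1, h2]
  refine ⟨fun i => ?_, fun i h => ?_, fun i h => ?_⟩
  · exact (key212 (c (i-1)) (c i) (c (i+1)) (c (i+2))).1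
  · rw [hpr]
    exact (key212 (c (i-1)) (c i) (c (i+1)) (c (i+2))).2.1
      (by rwa [applicable212, happ] at h)
  · rw [hpr]
    exact (key212 (c (i-1)) (c i) (c (i+1)) (c (i+2))).2.2
      (by rwa [applicable212, happ] at h)
end

section
/- If a cellular automaton has a local rule such that no two overlapping neighborhoods can both be active (i.e., for any configuration, the set of active cells is an independent set with respect to the neighborhood adjacency), then for any configuration c and any two disjoint sets A, B of active cells, G_A(G_B(c)) = G_{A∪B}(c); in particular such an automaton is commutative. -/
open scoped Classical

private theorem one_side {d : ℕ} {S : Type*}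
    (G : ((Fin d → ℤ) → S) → (Fin d → ℤ) → S)
    (N : Finset (Fin d → ℤ))
    (hloc : ∀ (c c' : (Fin d → ℤ) → S) (i : Fin d → ℤ),
      (∀ n ∈ N, c (i + n) = c' (i + n)) → G c i = G c' i)
    (hind : ∀ (c : (Fin d → ℤ) → S) (i j : Fin d → ℤ), i ≠ j →
      (j - i ∈ N ∨ i - j ∈ N) → ¬ (ActiveCell G c i ∧ ActiveCell G c j))
    (c : (Fin d → ℤ) → S) (A B : Set (Fin d → ℤ)) (hAB : Disjoint A B)
    (hA : ∀ i ∈ A, ActiveCell G c i) (hB : ∀ i ∈ B, ActiveCell G c i) :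
    applyOn G A (applyOn G B c) = applyOn G (A ∪ B) c := by
  funext i
  simp only [applyOn, Set.mem_union]
  by_cases hiA : i ∈ A
  · have hiB : i ∉ B := fun h => (hAB.le_bot ⟨hiA, h⟩)
    have key : G (applyOn G B c) i = G c i := by
      apply hloc
      intro n hn
      by_cases hnB : i + n ∈ B
      · exfalso
        by_cases he : i + n = i
        · exact hiB (he ▸ hnB)
        · exact hind c i (i + n) (fun h => he h.symm)
            (Or.inl (by simpa using hn)) ⟨hA i hiA, hB _ hnB⟩
      · simp [applyOn, hnB]
    simp [hiA, applyOn, key]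
  · by_cases hiB : i ∈ B <;> simp [hiA, hiB, applyOn]

/-- If the active cells of any configuration always form an independent set with respect
to the neighborhood adjacency (no two neighboring cells simultaneously active), then
`G_A ∘ G_B = G_{A∪B} = G_B ∘ G_A` for all disjoint sets `A, B` of active cells; in
particular the automaton is commutative. -/
theorem independent_active_implies_commutative {d : ℕ} {S : Type*}
    (G : ((Fin d → ℤ) → S) → (Fin d → ℤ) → S)
    (N : Finset (Fin d → ℤ))
    (hloc : ∀ (c c' : (Fin d → ℤ) → S) (i : Fin d → ℤ),
      (∀ n ∈ N, c (i + n) = c' (i + n)) → G c i = G c' i)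
    (hind : ∀ (c : (Fin d → ℤ) → S) (i j : Fin d → ℤ), i ≠ j →
      (j - i ∈ N ∨ i - j ∈ N) → ¬ (ActiveCell G c i ∧ ActiveCell G c j)) :
    ∀ (c : (Fin d → ℤ) → S) (A B : Set (Fin d → ℤ)), Disjoint A B →
      (∀ i ∈ A, ActiveCell G c i) → (∀ i ∈ B, ActiveCell G c i) →
      applyOn G A (applyOn G B c) = applyOn G (A ∪ B) c ∧
      applyOn G B (applyOn G A c) = applyOn G (A ∪ B) c := by
  intro c A B hAB hA hB
  refine ⟨one_side G N hloc hind c A B hAB hA hB, ?_⟩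
  rw [Set.union_comm]
  exact one_side G N hloc hind c B A hAB.symm hB hA
end
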